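/- Fix a prime p. Let R be a p-torsion-free commutative ring with a Frobenius lift φ and associated δ-operator δ, extended to R[1/p]. Let I ⊆ R be an ideal and S ⊆ R a multiplicative subset with φ(S) ⊆ S. Then S^{−1}R is p-torsion free, φ extends uniquely to a Frobenius lift φ_S on S^{−1}R with δ-operator δ_S, and inside (S^{−1}R)[1/p] the S^{−1}R-subalgebra generated by the image of the R-subalgebra adjoin_R{ δ^i(x/p) : x ∈ I, i ≥ 0 } of R[1/p] equals the S^{−1}R-subalgebra generated by { δ_S^i(y/p) : y ∈ S^{−1}I, i ≥ 0 }, where S^{−1}I denotes the image ideal of I in S^{−1}R. -/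

import Mathlib

/-!
Localization is flat, so `S⁻¹R` stays `p`-torsion free, and `φ` extends to `S⁻¹R` because
`φ(S) ⊆ S`; clearing denominators shows that the extension is again a Frobenius lift.
The canonical map `R[1/p] → (S⁻¹R)[1/p]` intertwines the Frobenius lifts, hence, `p` being
invertible, the `δ`-operators; so the left-hand side is the `S⁻¹R`-algebra generated by the
`δ_S^i(x/p)` with `x ∈ I`. By the identities `δ(uv) = φ(u) δv + δu · v^p` and
`δ(u + v) = δu + δv - ∑_{0<k<p} (p choose k)/p · u^k v^(p-k)` this algebra is
`δ_S`-stable, and it contains `y/p` for every `y` in the ideal `S⁻¹I` generated by the image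
of `I`; hence it contains every `δ_S^i(y/p)`.
-/

/-- The canonical ring map `R[1/p] → (S⁻¹R)[1/p]` induced by `R → S⁻¹R`. -/
noncomputable def canMap (p : ℕ) {R : Type*} [CommRing R] (S : Submonoid R) :
    Localization.Away (p : R) →+* Localization.Away (p : Localization S) :=
  IsLocalization.Away.lift (S := Localization.Away (p : R)) (p : R)
    (g := (algebraMap (Localization S) (Localization.Away (p : Localization S))).comp
      (algebraMap R (Localization S)))
    (by
      have h : ((algebraMap (Localization S) (Localization.Away (p : Localization S))).comp
          (algebraMap R (Localization S))) ((p : R)) =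
          algebraMap (Localization S) (Localization.Away (p : Localization S))
            ((p : Localization S)) := by
        simp
      rw [h]
      exact IsLocalization.Away.algebraMap_isUnit (p : Localization S))

section DeltaOperator

variable {L : Type*} [CommRing L] {p : ℕ} {ψ : L →+* L} {δ : L → L}

theorem frobenius_eq_pow_add_delta (hδ : ∀ y, (p : L) * δ y = ψ y - y ^ p) (y : L) :
    ψ y = y ^ p + p * δ y := by
  linear_combination -hδ y

theorem delta_mul (hreg : IsLeftRegular (p : L)) (hδ : ∀ y, (p : L) * δ y = ψ y - y ^ p)
    (u v : L) : δ (u * v) = ψ u * δ v + δ u * v ^ p :=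
  hreg <| by
    simp only
    rw [hδ, map_mul]
    linear_combination -ψ u * hδ v - v ^ p * hδ u

theorem delta_add (hp : p.Prime) (hreg : IsLeftRegular (p : L))
    (hδ : ∀ y, (p : L) * δ y = ψ y - y ^ p) (u v : L) :
    δ (u + v) =
      δ u + δ v - ∑ k ∈ Finset.Ioo 0 p, u ^ k * v ^ (p - k) * ((p.choose k / p : ℕ) : L) :=
  hreg <| by
    simp only
    rw [hδ, map_add, add_pow_prime_eq' hp]
    linear_combination -hδ u - hδ v

theorem delta_mapsTo_adjoin {K : Type*} [CommRing K] [Algebra K L] (hp : p.Prime)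
    (hreg : IsLeftRegular (p : L)) (hδ : ∀ y, (p : L) * δ y = ψ y - y ^ p) {T : Set L}
    (hK : ∀ a : K, δ (algebraMap K L a) ∈ Set.range (algebraMap K L))
    (hT : ∀ t ∈ T, δ t ∈ Algebra.adjoin K T) :
    Set.MapsTo δ (Algebra.adjoin K T) (Algebra.adjoin K T) := by
  intro y hy
  induction hy using Algebra.adjoin_induction with
  | mem t ht => exact hT t ht
  | algebraMap a =>
    obtain ⟨b, hb⟩ := hK a
    exact hb ▸ Subalgebra.algebraMap_mem _ b
  | add u v hu hv hδu hδv =>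
    rw [delta_add hp hreg hδ]
    exact sub_mem (add_mem hδu hδv) <| Subalgebra.sum_mem _ fun k _ ↦
      mul_mem (mul_mem (pow_mem hu k) (pow_mem hv _)) (Subalgebra.natCast_mem _ _)
  | mul u v hu hv hδu hδv =>
    rw [delta_mul hreg hδ, frobenius_eq_pow_add_delta hδ]
    have hψu := add_mem (pow_mem hu p) (mul_mem (Subalgebra.natCast_mem _ p) hδu)
    exact add_mem (mul_mem hψu hδv) (mul_mem hδu (pow_mem hv p))

theorem delta_algebraMap_mem_range {K : Type*} [CommRing K] [Algebra K L] {φ : K →+* K}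
    (hreg : IsLeftRegular (p : L)) (hδ : ∀ y, (p : L) * δ y = ψ y - y ^ p)
    (hψ : ∀ a, ψ (algebraMap K L a) = algebraMap K L (φ a))
    (hφ : ∀ a, (p : K) ∣ φ a - a ^ p) (a : K) :
    δ (algebraMap K L a) ∈ Set.range (algebraMap K L) := by
  obtain ⟨b, hb⟩ := hφ a
  refine ⟨b, hreg ?_⟩
  simp only
  rw [hδ, hψ, ← map_pow, ← map_sub, hb, map_mul, map_natCast]

theorem semiconj_delta_of_semiconj_frobenius {A B : Type*} [CommRing A] [CommRing B]
    {f : A →+* B} {ψA : A →+* A} {ψB : B →+* B} {δA : A → A} {δB : B → B}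
    (hreg : IsLeftRegular (p : B)) (hδA : ∀ y, (p : A) * δA y = ψA y - y ^ p)
    (hδB : ∀ y, (p : B) * δB y = ψB y - y ^ p) (hψ : Function.Semiconj f ψA ψB) :
    Function.Semiconj f δA δB := fun a ↦
  hreg <| by
    simp only
    rw [hδB, ← hψ, ← map_pow, ← map_sub, ← hδA, map_mul, map_natCast]

end DeltaOperator

section Localization

variable {R A : Type*} [CommRing R] [CommRing A] [Algebra R A] (M : Submonoid R)
  [IsLocalization M A]

theorem existsUnique_ringHom_extension_of_isLocalization {φ : R →+* R}
    (hφ : ∀ s ∈ M, φ s ∈ M) :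
    ∃! φA : A →+* A, ∀ r, φA (algebraMap R A r) = algebraMap R A (φ r) :=
  ⟨IsLocalization.map A φ hφ, IsLocalization.map_eq hφ, fun _ h ↦
    IsLocalization.ringHom_ext M <| RingHom.ext fun r ↦ by
      simpa [h] using (IsLocalization.map_eq (S := A) hφ r).symm⟩

theorem dvd_sub_pow_of_isLocalization {φ : R →+* R} (hφ : ∀ s ∈ M, φ s ∈ M)
    {c : R} {n : ℕ} (hc : ∀ r, c ∣ φ r - r ^ n) {φA : A →+* A}
    (hφA : ∀ r, φA (algebraMap R A r) = algebraMap R A (φ r)) (a : A) :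
    algebraMap R A c ∣ φA a - a ^ n := by
  obtain ⟨⟨r, s⟩, rfl⟩ := IsLocalization.mk'_surjective M a
  set a := IsLocalization.mk' A r s
  have has : a * algebraMap R A s = algebraMap R A r := IsLocalization.mk'_spec A r s
  have hφas : φA a * algebraMap R A (φ s) = algebraMap R A (φ r) := by
    rw [← hφA, ← hφA, ← map_mul, has]
  have hunit : IsUnit (algebraMap R A (φ s * s ^ n)) :=
    IsLocalization.map_units A (⟨_, M.mul_mem (hφ s s.2) (pow_mem s.2 n)⟩ : M)
  have hcleared : (φA a - a ^ n) * algebraMap R A (φ s * s ^ n) =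
      algebraMap R A ((φ r - r ^ n) * s ^ n - r ^ n * (φ s - s ^ n)) := by
    simp only [map_mul, map_sub, map_pow, ← has, ← hφas]
    ring
  rw [← hunit.dvd_mul_right, hcleared]
  exact map_dvd _ (dvd_sub (dvd_mul_of_dvd_left (hc r) _) (dvd_mul_of_dvd_right (hc s) _))

end Localization

section DeltaOrbit

variable {K L : Type*} [CommRing K] [CommRing L] [Algebra K L]

/-- For `c = 1/p` this is the set `{δ^i(x/p) | x ∈ J, i ≥ 0}` of the statement. -/
def deltaOrbit (δ : L → L) (c : L) (J : Set K) : Set L :=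
  {y | ∃ x ∈ J, ∃ i : ℕ, y = δ^[i] (algebraMap K L x * c)}

theorem mapsTo_deltaOrbit (δ : L → L) (c : L) (J : Set K) :
    Set.MapsTo δ (deltaOrbit δ c J) (deltaOrbit δ c J) := by
  rintro _ ⟨x, hx, i, rfl⟩
  exact ⟨x, hx, i + 1, (Function.iterate_succ_apply' δ i _).symm⟩

theorem deltaOrbit_mono (δ : L → L) (c : L) {J J' : Set K} (h : J ⊆ J') :
    deltaOrbit δ c J ⊆ deltaOrbit δ c J' := by
  rintro _ ⟨x, hx, i, rfl⟩
  exact ⟨x, h hx, i, rfl⟩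

theorem image_deltaOrbit {K' L' : Type*} [CommRing K'] [CommRing L'] [Algebra K' L']
    {f : L →+* L'} {g : K →+* K'} (hfg : ∀ x, f (algebraMap K L x) = algebraMap K' L' (g x))
    {δ : L → L} {δ' : L' → L'} (hδ : Function.Semiconj f δ δ') (c : L) (J : Set K) :
    f '' deltaOrbit δ c J = deltaOrbit δ' (f c) (g '' J) := by
  ext y
  constructor
  · rintro ⟨_, ⟨x, hx, i, rfl⟩, rfl⟩
    exact ⟨g x, ⟨x, hx, rfl⟩, i, by rw [(hδ.iterate_right i).eq, map_mul, hfg]⟩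
  · rintro ⟨_, ⟨x, hx, rfl⟩, i, rfl⟩
    exact ⟨_, ⟨x, hx, i, rfl⟩, by rw [(hδ.iterate_right i).eq, map_mul, hfg]⟩

theorem adjoin_deltaOrbit_span {δ : L → L} {c : L} {X : Set K}
    (hδ : Set.MapsTo δ (Algebra.adjoin K (deltaOrbit δ c X))
      (Algebra.adjoin K (deltaOrbit δ c X))) :
    Algebra.adjoin K (deltaOrbit δ c (Ideal.span X : Set K)) =
      Algebra.adjoin K (deltaOrbit δ c X) := by
  refine le_antisymm (Algebra.adjoin_le ?_)
    (Algebra.adjoin_mono (deltaOrbit_mono δ c Ideal.subset_span))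
  rintro _ ⟨x, hx, i, rfl⟩
  refine hδ.iterate i ?_
  have hspan : Ideal.span X ≤ (Algebra.adjoin K (deltaOrbit δ c X)).toSubmodule.comap
      (LinearMap.toSpanSingleton K L c) :=
    Ideal.span_le.mpr fun x hx ↦ Algebra.subset_adjoin ⟨x, hx, 0, (Algebra.smul_def x c)⟩
  simpa [Algebra.smul_def] using hspan hx

end DeltaOrbit

theorem adjoin_image_adjoin_of_tower {R K A B : Type*} [CommRing R] [CommRing K] [CommRing A]
    [CommRing B] [Algebra R A] [Algebra R K] [Algebra R B] [Algebra K B] [IsScalarTower R K B]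
    (f : A →ₐ[R] B) (s : Set A) :
    Algebra.adjoin K (f '' Algebra.adjoin R s) = Algebra.adjoin K (f '' s) := by
  rw [← Subalgebra.coe_map, AlgHom.map_adjoin, Algebra.adjoin_adjoin_of_tower]

section CanMap

variable (p : ℕ) {R : Type*} [CommRing R] (S : Submonoid R)

theorem canMap_algebraMap (r : R) :
    canMap p S (algebraMap R (Localization.Away (p : R)) r) =
      algebraMap (Localization S) _ (algebraMap R (Localization S) r) :=
  IsLocalization.Away.lift_eq _ _ r

theorem canMap_invSelf :
    canMap p S (IsLocalization.Away.invSelf (S := Localization.Away (p : R)) (p : R)) =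
      IsLocalization.Away.invSelf (S := Localization.Away (p : Localization S))
        (p : Localization S) := by
  have hinvS := IsLocalization.Away.mul_invSelf (S := Localization.Away (p : Localization S))
    (p : Localization S)
  have hinvR := congrArg (canMap p S)
    (IsLocalization.Away.mul_invSelf (S := Localization.Away (p : R)) (p : R))
  rw [map_mul, map_one, map_natCast, map_natCast] at hinvR
  rw [map_natCast] at hinvS
  exact left_inv_eq_right_inv ((mul_comm _ _).trans hinvR) hinvS

noncomputable def canMapAlgHom :
    Localization.Away (p : R) →ₐ[R] Localization.Away (p : Localization S) :=
  { canMap p S with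
    commutes' := fun r ↦ (canMap_algebraMap p S r).trans
      (IsScalarTower.algebraMap_apply R (Localization S) _ r).symm }

theorem semiconj_canMap {φ : R →+* R}
    {ψ : Localization.Away (p : R) →+* Localization.Away (p : R)}
    (hψ : ∀ a : R, ψ (algebraMap R (Localization.Away (p : R)) a)
        = algebraMap R (Localization.Away (p : R)) (φ a))
    {φS : Localization S →+* Localization S}
    (hφS : ∀ r : R, φS (algebraMap R (Localization S) r) = algebraMap R (Localization S) (φ r))
    {ψS : Localization.Away (p : Localization S) →+* Localization.Away (p : Localization S)}
    (hψS : ∀ a : Localization S,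
      ψS (algebraMap (Localization S) (Localization.Away (p : Localization S)) a)
        = algebraMap (Localization S) (Localization.Away (p : Localization S)) (φS a)) :
    Function.Semiconj (canMap p S) ψ ψS := by
  have h : (canMap p S).comp ψ = ψS.comp (canMap p S) :=
    IsLocalization.ringHom_ext (Submonoid.powers (p : R)) <| RingHom.ext fun r ↦ by
      simp only [RingHom.comp_apply, hψ, canMap_algebraMap, hψS, hφS]
  exact RingHom.congr_fun h

end CanMap

/-- Let `R` be a `p`-torsion-free commutative ring with a Frobenius lift
`φ` (with `δ`-operator `δR`), extended to `R[1/p]` as `ψ` with extended `δ`-operator `δ`.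
Let `I ⊆ R` be an ideal and `S ⊆ R` a multiplicative subset with `φ(S) ⊆ S`. Then `S⁻¹R`
is `p`-torsion free, `φ` extends uniquely to a ring endomorphism `φ_S` of `S⁻¹R`; any such
extension is a Frobenius lift, and for its `δ`-operator (extended to `(S⁻¹R)[1/p]` via an
extension `ψ_S` with `δ`-operator `δ_S`), the `S⁻¹R`-subalgebra of `(S⁻¹R)[1/p]` generated
by the image of `adjoin_R{ δ^i(x/p) : x ∈ I, i ≥ 0 }` equals the `S⁻¹R`-subalgebra
generated by `{ δ_S^i(y/p) : y ∈ S⁻¹I, i ≥ 0 }`. -/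
theorem stmt13 (p : ℕ) (hp : p.Prime) {R : Type*} [CommRing R]
    (hR : Function.Injective fun a : R => (p : R) * a)
    (φ : R →+* R) (δR : R → R)
    (hδR : ∀ a : R, (p : R) * δR a = φ a - a ^ p)
    (ψ : Localization.Away (p : R) →+* Localization.Away (p : R))
    (hψ : ∀ a : R, ψ (algebraMap R (Localization.Away (p : R)) a)
        = algebraMap R (Localization.Away (p : R)) (φ a))
    (δ : Localization.Away (p : R) → Localization.Away (p : R))
    (hδ : ∀ y : Localization.Away (p : R), (p : Localization.Away (p : R)) * δ y = ψ y - y ^ p)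
    (I : Ideal R) (S : Submonoid R) (hS : ∀ s ∈ S, φ s ∈ S) :
    (Function.Injective fun a : Localization S => (p : Localization S) * a)
    ∧ (∃! φS : Localization S →+* Localization S,
        ∀ r : R, φS (algebraMap R (Localization S) r) = algebraMap R (Localization S) (φ r))
    ∧ (∀ φS : Localization S →+* Localization S,
        (∀ r : R, φS (algebraMap R (Localization S) r) = algebraMap R (Localization S) (φ r)) →
        ((∀ a : Localization S, ∃ b : Localization S, φS a - a ^ p = (p : Localization S) * b)
        ∧ ∀ ψS : Localization.Away (p : Localization S) →+* Localization.Away (p : Localization S),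
            (∀ a : Localization S,
              ψS (algebraMap (Localization S) (Localization.Away (p : Localization S)) a)
                = algebraMap (Localization S) (Localization.Away (p : Localization S)) (φS a)) →
            ∀ δS : Localization.Away (p : Localization S) → Localization.Away (p : Localization S),
              (∀ y : Localization.Away (p : Localization S),
                (p : Localization.Away (p : Localization S)) * δS y = ψS y - y ^ p) →
              Algebra.adjoin (Localization S)
                  (⇑(canMap p S) '' (Algebra.adjoin R
                    {y : Localization.Away (p : R) | ∃ x ∈ I, ∃ i : ℕ,
                      y = δ^[i] (algebraMap R (Localization.Away (p : R)) x *
                        IsLocalization.Away.invSelf (S := Localization.Away (p : R)) (p : R))} :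
                    Set (Localization.Away (p : R))))
                = Algebra.adjoin (Localization S)
                  {y : Localization.Away (p : Localization S) |
                    ∃ z ∈ I.map (algebraMap R (Localization S)), ∃ i : ℕ,
                      y = δS^[i] (algebraMap (Localization S)
                          (Localization.Away (p : Localization S)) z *
                        IsLocalization.Away.invSelf
                          (S := Localization.Away (p : Localization S)) (p : Localization S))})) := by
  have hregS : IsLeftRegular (p : Localization S) := by
    have h := IsSMulRegular.of_isLocalization (Localization S) S (x := (p : R)) hR
    rwa [map_natCast] at h
  refine ⟨hregS, existsUnique_ringHom_extension_of_isLocalization S hS, fun φS hφS ↦ ?_⟩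
  have hfrobS : ∀ a, (p : Localization S) ∣ φS a - a ^ p := fun a ↦ by
    simpa using dvd_sub_pow_of_isLocalization S hS (fun r ↦ ⟨δR r, (hδR r).symm⟩) hφS a
  refine ⟨hfrobS, fun ψS hψS δS hδS ↦ ?_⟩
  have hreg : IsLeftRegular (p : Localization.Away (p : Localization S)) := by
    simpa using (IsLocalization.Away.algebraMap_isUnit
      (S := Localization.Away (p : Localization S)) (p : Localization S)).isRegular.left
  have hsemi : Function.Semiconj (canMap p S) δ δS :=
    semiconj_delta_of_semiconj_frobenius hreg hδ hδS (semiconj_canMap p S hψ hφS hψS)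
  have hmaps := delta_mapsTo_adjoin hp hreg hδS (delta_algebraMap_mem_range hreg hδS hψS hfrobS)
    fun t ht ↦ Algebra.subset_adjoin (mapsTo_deltaOrbit δS
      (IsLocalization.Away.invSelf (p : Localization S)) (algebraMap R (Localization S) '' I) ht)
  calc _ = Algebra.adjoin (Localization S)
          (canMap p S '' deltaOrbit δ (IsLocalization.Away.invSelf (p : R)) (I : Set R)) :=
        adjoin_image_adjoin_of_tower (canMapAlgHom p S) _
    _ = Algebra.adjoin (Localization S) (deltaOrbit δS
          (IsLocalization.Away.invSelf (p : Localization S))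
          (algebraMap R (Localization S) '' I)) := by
        rw [image_deltaOrbit (canMap_algebraMap p S) hsemi, canMap_invSelf]
    _ = _ := (adjoin_deltaOrbit_span hmaps).symm
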